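/- arXiv:math/0310042 — 2 statements merged into one kernel-verified Lean document; each statement's English description precedes it below -/
import Mathlib

section
/- Let U_0, …, U_d denote any one of the six decompositions [0D], [0*D*], [0*D], [0*0], [D*0], [D*D] of V. Then for 0 ≤ i ≤ d the partial sums U_0 + ⋯ + U_i and U_i + ⋯ + U_d are given as follows: for [0D]: V_0+⋯+V_i and V_i+⋯+V_d; for [0*D*]: V*_0+⋯+V*_i and V*_i+⋯+V*_d; for [0*D]: V*_0+⋯+V*_i and V_i+⋯+V_d; for [0*0]: V*_0+⋯+V*_i and V_0+⋯+V_{d−i}; for [D*0]: V*_{d−i}+⋯+V*_d and V_0+⋯+V_{d−i}; for [D*D]: V*_{d−i}+⋯+V*_d and V_i+⋯+V_d. -/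
noncomputable section

open Submodule

variable {K : Type*} [Field K]

/-- `[n]_q = (q^n − q^{−n})/(q − q^{−1})`. -/
def qInt (q : K) (n : ℤ) : K := (q ^ n - q ^ (-n)) / (q - q⁻¹)

/-- Elements `y₀⁺, y₁⁺, y₀⁻, y₁⁻, k₀, k₀⁻¹, k₁, k₁⁻¹` of a unital associative `K`-algebra
satisfy the alternate relations. -/
structure AlternateRelations (q : K) {A : Type*} [Ring A] [Algebra K A]
    (yp ym k kinv : Fin 2 → A) : Prop where
  k_kinv : ∀ i, k i * kinv i = 1
  kinv_k : ∀ i, kinv i * k i = 1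
  central_yp : ∀ i, k 0 * k 1 * yp i = yp i * (k 0 * k 1)
  central_ym : ∀ i, k 0 * k 1 * ym i = ym i * (k 0 * k 1)
  central_k : ∀ i, k 0 * k 1 * k i = k i * (k 0 * k 1)
  central_kinv : ∀ i, k 0 * k 1 * kinv i = kinv i * (k 0 * k 1)
  rel_yp_k : ∀ i, (q - q⁻¹)⁻¹ • (q • (yp i * k i) - q⁻¹ • (k i * yp i)) = 1
  rel_k_ym : ∀ i, (q - q⁻¹)⁻¹ • (q • (k i * ym i) - q⁻¹ • (ym i * k i)) = 1
  rel_ym_yp : ∀ i, (q - q⁻¹)⁻¹ • (q • (ym i * yp i) - q⁻¹ • (yp i * ym i)) = 1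
  rel_yp_ym : ∀ i j, i ≠ j →
    (q - q⁻¹)⁻¹ • (q • (yp i * ym j) - q⁻¹ • (ym j * yp i)) = kinv 0 * kinv 1
  serre_p : ∀ i j, i ≠ j →
    yp i ^ 3 * yp j - qInt q 3 • (yp i ^ 2 * yp j * yp i)
      + qInt q 3 • (yp i * yp j * yp i ^ 2) - yp j * yp i ^ 3 = 0
  serre_m : ∀ i j, i ≠ j →
    ym i ^ 3 * ym j - qInt q 3 • (ym i ^ 2 * ym j * ym i)
      + qInt q 3 • (ym i * ym j * ym i ^ 2) - ym j * ym i ^ 3 = 0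

/-- Elements `e₀⁺, e₁⁺, e₀⁻, e₁⁻, K₀, K₀⁻¹, K₁, K₁⁻¹` of a unital associative `K`-algebra
satisfy the Chevalley relations of `U_q(sl₂ hat)`. -/
structure ChevalleyRelations (q : K) {A : Type*} [Ring A] [Algebra K A]
    (ep em Kg Kginv : Fin 2 → A) : Prop where
  K_Kinv : ∀ i, Kg i * Kginv i = 1
  Kinv_K : ∀ i, Kginv i * Kg i = 1
  K_comm : Kg 0 * Kg 1 = Kg 1 * Kg 0
  KepK_same : ∀ i, Kg i * ep i * Kginv i = (q ^ (2 : ℤ)) • ep i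
  KemK_same : ∀ i, Kg i * em i * Kginv i = (q ^ (-2 : ℤ)) • em i
  KepK_diff : ∀ i j, i ≠ j → Kg i * ep j * Kginv i = (q ^ (-2 : ℤ)) • ep j
  KemK_diff : ∀ i j, i ≠ j → Kg i * em j * Kginv i = (q ^ (2 : ℤ)) • em j
  e_comm_same : ∀ i, ep i * em i - em i * ep i = (q - q⁻¹)⁻¹ • (Kg i - Kginv i)
  e_comm_diff : ∀ i j, i ≠ j → ep i * em j = em j * ep i
  serre_p : ∀ i j, i ≠ j →
    ep i ^ 3 * ep j - qInt q 3 • (ep i ^ 2 * ep j * ep i)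
      + qInt q 3 • (ep i * ep j * ep i ^ 2) - ep j * ep i ^ 3 = 0
  serre_m : ∀ i j, i ≠ j →
    em i ^ 3 * em j - qInt q 3 • (em i ^ 2 * em j * em i)
      + qInt q 3 • (em i * em j * em i ^ 2) - em j * em i ^ 3 = 0

variable {V : Type*} [AddCommGroup V] [Module K V]

/-- A decomposition of `V` of length `d`: nonzero subspaces `U 0, …, U d`
(indexed by `ℤ`, with `U i = ⊥` outside `[0, d]`) whose direct sum is `V`. -/
structure IsDecomposition (d : ℕ) (U : ℤ → Submodule K V) : Prop where
  bot_of_lt : ∀ i : ℤ, i < 0 → U i = ⊥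
  bot_of_gt : ∀ i : ℤ, (d : ℤ) < i → U i = ⊥
  ne_bot : ∀ i : ℤ, 0 ≤ i → i ≤ (d : ℤ) → U i ≠ ⊥
  indep : iSupIndep U
  sup_eq_top : ⨆ i, U i = ⊤

/-- `A, A*` is a tridiagonal pair on `V` with standard orderings `Vs 0, …, Vs d` and
`Vs' 0, …, Vs' d` of the eigenspaces of `A` resp. `A*`, with corresponding eigenvalues
`θ i` resp. `θ' i`. -/
structure IsTridiagonalPair (A A' : Module.End K V) (d : ℕ)
    (Vs Vs' : ℤ → Submodule K V) (θ θ' : ℤ → K) : Prop where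
  decompV : IsDecomposition d Vs
  decompV' : IsDecomposition d Vs'
  eig : ∀ i : ℤ, ∀ v ∈ Vs i, A v = θ i • v
  eig' : ∀ i : ℤ, ∀ v ∈ Vs' i, A' v = θ' i • v
  theta_inj : ∀ i j : ℤ, 0 ≤ i → i ≤ (d : ℤ) → 0 ≤ j → j ≤ (d : ℤ) → θ i = θ j → i = j
  theta'_inj : ∀ i j : ℤ, 0 ≤ i → i ≤ (d : ℤ) → 0 ≤ j → j ≤ (d : ℤ) → θ' i = θ' j → i = j
  trid : ∀ i : ℤ, (Vs i).map A' ≤ Vs (i - 1) ⊔ Vs i ⊔ Vs (i + 1)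
  trid' : ∀ i : ℤ, (Vs' i).map A ≤ Vs' (i - 1) ⊔ Vs' i ⊔ Vs' (i + 1)
  irred : ∀ W : Submodule K V, W.map A ≤ W → W.map A' ≤ W → W = ⊥ ∨ W = ⊤

/-- The sum `U m + U (m+1) + ⋯ + U n`. -/
def sumIcc (U : ℤ → Submodule K V) (m n : ℤ) : Submodule K V :=
  ⨆ j ∈ Set.Icc m n, U j

/-- Decomposition `[0D]`: the `i`-th subspace is `V_i`. -/
def dec0D (Vs : ℤ → Submodule K V) : ℤ → Submodule K V := Vs

/-- Decomposition `[0*D*]`: the `i`-th subspace is `V*_i`. -/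
def dec0sDs (Vs' : ℤ → Submodule K V) : ℤ → Submodule K V := Vs'

/-- Decomposition `[0*D]`: the `i`-th subspace is `(V*_0+⋯+V*_i) ∩ (V_i+⋯+V_d)`. -/
def dec0sD (d : ℕ) (Vs Vs' : ℤ → Submodule K V) (i : ℤ) : Submodule K V :=
  sumIcc Vs' 0 i ⊓ sumIcc Vs i (d : ℤ)

/-- Decomposition `[0*0]`: the `i`-th subspace is `(V*_0+⋯+V*_i) ∩ (V_0+⋯+V_{d−i})`. -/
def dec0s0 (d : ℕ) (Vs Vs' : ℤ → Submodule K V) (i : ℤ) : Submodule K V :=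
  sumIcc Vs' 0 i ⊓ sumIcc Vs 0 ((d : ℤ) - i)

/-- Decomposition `[D*0]`: the `i`-th subspace is `(V*_{d−i}+⋯+V*_d) ∩ (V_0+⋯+V_{d−i})`. -/
def decDs0 (d : ℕ) (Vs Vs' : ℤ → Submodule K V) (i : ℤ) : Submodule K V :=
  sumIcc Vs' ((d : ℤ) - i) (d : ℤ) ⊓ sumIcc Vs 0 ((d : ℤ) - i)

/-- Decomposition `[D*D]`: the `i`-th subspace is `(V*_{d−i}+⋯+V*_d) ∩ (V_i+⋯+V_d)`. -/
def decDsD (d : ℕ) (Vs Vs' : ℤ → Submodule K V) (i : ℤ) : Submodule K V :=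
  sumIcc Vs' ((d : ℤ) - i) (d : ℤ) ⊓ sumIcc Vs i (d : ℤ)

section Aux

variable {V : Type*} [AddCommGroup V] [Module K V]

lemma le_sumIcc (U : ℤ → Submodule K V) {a b j : ℤ} (h1 : a ≤ j) (h2 : j ≤ b) :
    U j ≤ sumIcc U a b :=
  le_iSup₂_of_le j ⟨h1, h2⟩ le_rfl

lemma sumIcc_le {U : ℤ → Submodule K V} {a b : ℤ} {W : Submodule K V}
    (h : ∀ j, a ≤ j → j ≤ b → U j ≤ W) : sumIcc U a b ≤ W :=
  iSup₂_le fun j hj => h j hj.1 hj.2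

lemma sumIcc_mono (U : ℤ → Submodule K V) {a b a' b' : ℤ} (h1 : a' ≤ a) (h2 : b ≤ b') :
    sumIcc U a b ≤ sumIcc U a' b' :=
  sumIcc_le fun j hj1 hj2 => le_sumIcc U (h1.trans hj1) (hj2.trans h2)

lemma sumIcc_bot (U : ℤ → Submodule K V) {a b : ℤ} (h : b < a) : sumIcc U a b = ⊥ :=
  le_bot_iff.mp (sumIcc_le fun j hj1 hj2 => absurd (hj1.trans hj2) (by omega))

lemma sumIcc_reflect (U : ℤ → Submodule K V) (c a b : ℤ) :
    sumIcc (fun j => U (c - j)) a b = sumIcc U (c - b) (c - a) := by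
  refine le_antisymm (sumIcc_le fun j h1 h2 => le_sumIcc U (by omega) (by omega))
    (sumIcc_le fun j h1 h2 => ?_)
  refine le_iSup₂_of_le (c - j) ⟨by omega, by omega⟩ ?_
  exact le_of_eq (congrArg U (by ring))

lemma map_sumIcc (f : Module.End K V) (U : ℤ → Submodule K V) (a b : ℤ) :
    Submodule.map f (sumIcc U a b) = ⨆ j ∈ Set.Icc a b, Submodule.map f (U j) := by
  simp [sumIcc, Submodule.map_iSup]

lemma IsDecomposition.sumIcc_top {d : ℕ} {U : ℤ → Submodule K V}
    (hD : IsDecomposition d U) : sumIcc U 0 (d : ℤ) = ⊤ := by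
  refine le_antisymm le_top ?_
  rw [← hD.sup_eq_top]
  refine iSup_le fun j => ?_
  rcases lt_or_ge j 0 with h | h
  · rw [hD.bot_of_lt j h]; exact bot_le
  rcases le_or_gt j (d : ℤ) with h' | h'
  · exact le_sumIcc U h h'
  · rw [hD.bot_of_gt j h']; exact bot_le

lemma IsDecomposition.le_sumIcc_of {d : ℕ} {U : ℤ → Submodule K V}
    (hD : IsDecomposition d U) {a b j : ℤ}
    (h : (a ≤ j ∧ j ≤ b) ∨ j < 0 ∨ (d : ℤ) < j) : U j ≤ sumIcc U a b := by
  rcases h with ⟨h1, h2⟩ | h | h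
  · exact le_sumIcc U h1 h2
  · rw [hD.bot_of_lt j h]; exact bot_le
  · rw [hD.bot_of_gt j h]; exact bot_le

lemma IsDecomposition.rev {d : ℕ} {U : ℤ → Submodule K V} (hD : IsDecomposition d U) :
    IsDecomposition d (fun j => U ((d : ℤ) - j)) where
  bot_of_lt i hi := hD.bot_of_gt _ (by omega)
  bot_of_gt i hi := hD.bot_of_lt _ (by omega)
  ne_bot i h1 h2 := hD.ne_bot _ (by omega) (by omega)
  indep := by
    intro i
    exact (hD.indep ((d : ℤ) - i)).mono_right
      (iSup₂_le fun j hj => le_iSup₂_of_le ((d : ℤ) - j) (by omega) le_rfl)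
  sup_eq_top := by
    have hs : Function.Surjective (fun j : ℤ => (d : ℤ) - j) := fun j => ⟨(d : ℤ) - j, by ring⟩
    exact (hs.iSup_comp U).trans hD.sup_eq_top

lemma IsTridiagonalPair.revV {A A' : Module.End K V} {d : ℕ} {Vs Vs' : ℤ → Submodule K V}
    {θ θ' : ℤ → K} (hTD : IsTridiagonalPair A A' d Vs Vs' θ θ') :
    IsTridiagonalPair A A' d (fun j => Vs ((d : ℤ) - j)) Vs'
      (fun j => θ ((d : ℤ) - j)) θ' where
  decompV := hTD.decompV.rev
  decompV' := hTD.decompV'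
  eig i v hv := hTD.eig _ v hv
  eig' := hTD.eig'
  theta_inj i j h1 h2 h3 h4 h5 := by
    have := hTD.theta_inj ((d : ℤ) - i) ((d : ℤ) - j)
      (by omega) (by omega) (by omega) (by omega) h5
    omega
  theta'_inj := hTD.theta'_inj
  trid i := by
    refine (hTD.trid ((d : ℤ) - i)).trans ?_
    have e1 : (d : ℤ) - i - 1 = (d : ℤ) - (i + 1) := by ring
    have e2 : (d : ℤ) - i + 1 = (d : ℤ) - (i - 1) := by ring
    rw [e1, e2]
    exact sup_le (sup_le le_sup_right (le_sup_of_le_left le_sup_right))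
      (le_sup_of_le_left le_sup_left)
  trid' := hTD.trid'
  irred := hTD.irred

lemma IsTridiagonalPair.revV' {A A' : Module.End K V} {d : ℕ} {Vs Vs' : ℤ → Submodule K V}
    {θ θ' : ℤ → K} (hTD : IsTridiagonalPair A A' d Vs Vs' θ θ') :
    IsTridiagonalPair A A' d Vs (fun j => Vs' ((d : ℤ) - j))
      θ (fun j => θ' ((d : ℤ) - j)) where
  decompV := hTD.decompV
  decompV' := hTD.decompV'.rev
  eig := hTD.eig
  eig' i v hv := hTD.eig' _ v hv
  theta_inj := hTD.theta_inj
  theta'_inj i j h1 h2 h3 h4 h5 := by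
    have := hTD.theta'_inj ((d : ℤ) - i) ((d : ℤ) - j)
      (by omega) (by omega) (by omega) (by omega) h5
    omega
  trid := hTD.trid
  trid' i := by
    refine (hTD.trid' ((d : ℤ) - i)).trans ?_
    have e1 : (d : ℤ) - i - 1 = (d : ℤ) - (i + 1) := by ring
    have e2 : (d : ℤ) - i + 1 = (d : ℤ) - (i - 1) := by ring
    rw [e1, e2]
    exact sup_le (sup_le le_sup_right (le_sup_of_le_left le_sup_right))
      (le_sup_of_le_left le_sup_left)
  irred := hTD.irred

lemma splitLemma {A A' : Module.End K V} {d : ℕ} {Vs Vs' : ℤ → Submodule K V}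
    {θ θ' : ℤ → K} (hTD : IsTridiagonalPair A A' d Vs Vs' θ θ') (i : ℤ)
    (hi0 : 0 ≤ i) (hid : i ≤ (d : ℤ)) :
    sumIcc (fun j => sumIcc Vs' 0 j ⊓ sumIcc Vs j (d : ℤ)) 0 i = sumIcc Vs' 0 i ∧
    sumIcc (fun j => sumIcc Vs' 0 j ⊓ sumIcc Vs j (d : ℤ)) i (d : ℤ) = sumIcc Vs i (d : ℤ) := by
  have hGtop : sumIcc Vs 0 (d : ℤ) = ⊤ := hTD.decompV.sumIcc_top
  -- A raises the flag F n = Vs'_0 + ... + Vs'_n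
  have hFA : ∀ n : ℤ, ∀ v ∈ sumIcc Vs' 0 n, A v ∈ sumIcc Vs' 0 (n + 1) := by
    intro n
    have hmap : Submodule.map A (sumIcc Vs' 0 n) ≤ sumIcc Vs' 0 (n + 1) := by
      rw [map_sumIcc]
      refine iSup₂_le fun j hj => ?_
      have hj1 := hj.1; have hj2 := hj.2
      refine (hTD.trid' j).trans ?_
      exact sup_le (sup_le (hTD.decompV'.le_sumIcc_of (by omega))
        (hTD.decompV'.le_sumIcc_of (by omega))) (hTD.decompV'.le_sumIcc_of (by omega))
    exact fun v hv => hmap ⟨v, hv, rfl⟩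
  -- A' lowers the flag G n = Vs_n + ... + Vs_d
  have hGA' : ∀ n : ℤ, ∀ v ∈ sumIcc Vs n (d : ℤ), A' v ∈ sumIcc Vs (n - 1) (d : ℤ) := by
    intro n
    have hmap : Submodule.map A' (sumIcc Vs n (d : ℤ)) ≤ sumIcc Vs (n - 1) (d : ℤ) := by
      rw [map_sumIcc]
      refine iSup₂_le fun j hj => ?_
      have hj1 := hj.1; have hj2 := hj.2
      refine (hTD.trid j).trans ?_
      exact sup_le (sup_le (hTD.decompV.le_sumIcc_of (by omega))
        (hTD.decompV.le_sumIcc_of (by omega))) (hTD.decompV.le_sumIcc_of (by omega))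
    exact fun v hv => hmap ⟨v, hv, rfl⟩
  -- A' - θ'_n lowers F
  have hFA' : ∀ n : ℤ, ∀ v ∈ sumIcc Vs' 0 n, A' v - θ' n • v ∈ sumIcc Vs' 0 (n - 1) := by
    intro n
    have hmap : Submodule.map (A' - θ' n • (1 : Module.End K V)) (sumIcc Vs' 0 n)
        ≤ sumIcc Vs' 0 (n - 1) := by
      rw [map_sumIcc]
      refine iSup₂_le fun j hj => ?_
      rintro x ⟨v, hv, rfl⟩
      have he : A' v = θ' j • v := hTD.eig' j v hv
      have hx : (A' - θ' n • (1 : Module.End K V)) v = (θ' j - θ' n) • v := by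
        simp [he, sub_smul]
      rw [hx]
      rcases eq_or_lt_of_le hj.2 with hje | hjl
      · rw [hje, sub_self, zero_smul]; exact zero_mem _
      · exact hTD.decompV'.le_sumIcc_of (Or.inl ⟨hj.1, by omega⟩)
          ((Vs' j).smul_mem _ hv)
    intro v hv
    have := hmap ⟨v, hv, rfl⟩
    simpa using this
  -- A - θ_n raises G
  have hGA : ∀ n : ℤ, ∀ v ∈ sumIcc Vs n (d : ℤ), A v - θ n • v ∈ sumIcc Vs (n + 1) (d : ℤ) := by
    intro n
    have hmap : Submodule.map (A - θ n • (1 : Module.End K V)) (sumIcc Vs n (d : ℤ))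
        ≤ sumIcc Vs (n + 1) (d : ℤ) := by
      rw [map_sumIcc]
      refine iSup₂_le fun j hj => ?_
      rintro x ⟨v, hv, rfl⟩
      have he : A v = θ j • v := hTD.eig j v hv
      have hx : (A - θ n • (1 : Module.End K V)) v = (θ j - θ n) • v := by
        simp [he, sub_smul]
      rw [hx]
      rcases eq_or_lt_of_le hj.1 with hje | hjl
      · rw [← hje, sub_self, zero_smul]; exact zero_mem _
      · exact hTD.decompV.le_sumIcc_of (Or.inl ⟨by omega, hj.2⟩)
          ((Vs j).smul_mem _ hv)
    intro v hv
    have := hmap ⟨v, hv, rfl⟩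
    simpa using this
  -- the split subspaces W h and their sum
  have hWA : ∀ h : ℤ, ∀ v ∈ sumIcc Vs' 0 h ⊓ sumIcc Vs h (d : ℤ),
      A v ∈ (sumIcc Vs' 0 h ⊓ sumIcc Vs h (d : ℤ))
        ⊔ (sumIcc Vs' 0 (h + 1) ⊓ sumIcc Vs (h + 1) (d : ℤ)) := by
    intro h v hv
    obtain ⟨hv1, hv2⟩ := hv
    have h1 : θ h • v ∈ sumIcc Vs' 0 h ⊓ sumIcc Vs h (d : ℤ) :=
      ⟨Submodule.smul_mem _ _ hv1, Submodule.smul_mem _ _ hv2⟩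
    have h2 : A v - θ h • v ∈ sumIcc Vs' 0 (h + 1) ⊓ sumIcc Vs (h + 1) (d : ℤ) := by
      refine ⟨sub_mem (hFA h v hv1) ?_, hGA h v hv2⟩
      exact sumIcc_mono Vs' le_rfl (by omega) (Submodule.smul_mem _ _ hv1)
    have hv3 : A v = θ h • v + (A v - θ h • v) := by abel
    rw [hv3]
    exact add_mem (Submodule.mem_sup_left h1) (Submodule.mem_sup_right h2)
  have hWA' : ∀ h : ℤ, ∀ v ∈ sumIcc Vs' 0 h ⊓ sumIcc Vs h (d : ℤ),
      A' v ∈ (sumIcc Vs' 0 h ⊓ sumIcc Vs h (d : ℤ))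
        ⊔ (sumIcc Vs' 0 (h - 1) ⊓ sumIcc Vs (h - 1) (d : ℤ)) := by
    intro h v hv
    obtain ⟨hv1, hv2⟩ := hv
    have h1 : θ' h • v ∈ sumIcc Vs' 0 h ⊓ sumIcc Vs h (d : ℤ) :=
      ⟨Submodule.smul_mem _ _ hv1, Submodule.smul_mem _ _ hv2⟩
    have h2 : A' v - θ' h • v ∈ sumIcc Vs' 0 (h - 1) ⊓ sumIcc Vs (h - 1) (d : ℤ) := by
      refine ⟨hFA' h v hv1, sub_mem (hGA' h v hv2) ?_⟩
      exact sumIcc_mono Vs (by omega) le_rfl (Submodule.smul_mem _ _ hv2)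
    have hv3 : A' v = θ' h • v + (A' v - θ' h • v) := by abel
    rw [hv3]
    exact add_mem (Submodule.mem_sup_left h1) (Submodule.mem_sup_right h2)
  have hWtop : (⨆ h : ℤ, sumIcc Vs' 0 h ⊓ sumIcc Vs h (d : ℤ)) = ⊤ := by
    have hmA : Submodule.map A (⨆ h : ℤ, sumIcc Vs' 0 h ⊓ sumIcc Vs h (d : ℤ))
        ≤ ⨆ h : ℤ, sumIcc Vs' 0 h ⊓ sumIcc Vs h (d : ℤ) := by
      rw [Submodule.map_iSup]
      refine iSup_le fun h => ?_
      rintro x ⟨v, hv, rfl⟩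
      have hsub := sup_le (le_iSup (fun h : ℤ => sumIcc Vs' 0 h ⊓ sumIcc Vs h (↑d : ℤ)) h) (le_iSup _ (h + 1))
      exact hsub (hWA h v hv)
    have hmA' : Submodule.map A' (⨆ h : ℤ, sumIcc Vs' 0 h ⊓ sumIcc Vs h (d : ℤ))
        ≤ ⨆ h : ℤ, sumIcc Vs' 0 h ⊓ sumIcc Vs h (d : ℤ) := by
      rw [Submodule.map_iSup]
      refine iSup_le fun h => ?_
      rintro x ⟨v, hv, rfl⟩
      have hsub := sup_le (le_iSup (fun h : ℤ => sumIcc Vs' 0 h ⊓ sumIcc Vs h (↑d : ℤ)) h) (le_iSup _ (h - 1))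
      exact hsub (hWA' h v hv)
    rcases hTD.irred _ hmA hmA' with hbot | htop
    · exfalso
      refine hTD.decompV'.ne_bot 0 le_rfl (by omega) (le_bot_iff.mp ?_)
      have hle : Vs' 0 ≤ sumIcc Vs' 0 0 ⊓ sumIcc Vs 0 (d : ℤ) :=
        le_inf (le_sumIcc Vs' le_rfl le_rfl) (by rw [hGtop]; exact le_top)
      exact hle.trans ((le_iSup _ (0 : ℤ)).trans hbot.le)
    · exact htop
  -- the subspaces Z h = F h ⊓ G (h+1) vanish
  have hZbot : ∀ h : ℤ, sumIcc Vs' 0 h ⊓ sumIcc Vs (h + 1) (d : ℤ) = ⊥ := by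
    have hZA : ∀ h : ℤ, ∀ v ∈ sumIcc Vs' 0 h ⊓ sumIcc Vs (h + 1) (d : ℤ),
        A v ∈ (sumIcc Vs' 0 h ⊓ sumIcc Vs (h + 1) (d : ℤ))
          ⊔ (sumIcc Vs' 0 (h + 1) ⊓ sumIcc Vs (h + 1 + 1) (d : ℤ)) := by
      intro h v hv
      obtain ⟨hv1, hv2⟩ := hv
      have h1 : θ (h + 1) • v ∈ sumIcc Vs' 0 h ⊓ sumIcc Vs (h + 1) (d : ℤ) :=
        ⟨Submodule.smul_mem _ _ hv1, Submodule.smul_mem _ _ hv2⟩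
      have h2 : A v - θ (h + 1) • v ∈ sumIcc Vs' 0 (h + 1) ⊓ sumIcc Vs (h + 1 + 1) (d : ℤ) := by
        refine ⟨sub_mem (hFA h v hv1) ?_, hGA (h + 1) v hv2⟩
        exact sumIcc_mono Vs' le_rfl (by omega) (Submodule.smul_mem _ _ hv1)
      have hv3 : A v = θ (h + 1) • v + (A v - θ (h + 1) • v) := by abel
      rw [hv3]
      exact add_mem (Submodule.mem_sup_left h1) (Submodule.mem_sup_right h2)
    have hZA' : ∀ h : ℤ, ∀ v ∈ sumIcc Vs' 0 h ⊓ sumIcc Vs (h + 1) (d : ℤ),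
        A' v ∈ (sumIcc Vs' 0 h ⊓ sumIcc Vs (h + 1) (d : ℤ))
          ⊔ (sumIcc Vs' 0 (h - 1) ⊓ sumIcc Vs (h - 1 + 1) (d : ℤ)) := by
      intro h v hv
      obtain ⟨hv1, hv2⟩ := hv
      have h1 : θ' h • v ∈ sumIcc Vs' 0 h ⊓ sumIcc Vs (h + 1) (d : ℤ) :=
        ⟨Submodule.smul_mem _ _ hv1, Submodule.smul_mem _ _ hv2⟩
      have h2 : A' v - θ' h • v ∈ sumIcc Vs' 0 (h - 1) ⊓ sumIcc Vs (h - 1 + 1) (d : ℤ) := by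
        refine ⟨hFA' h v hv1, ?_⟩
        have hg1 : A' v ∈ sumIcc Vs (h + 1 - 1) (d : ℤ) := hGA' (h + 1) v hv2
        rw [show h + 1 - 1 = h from by ring] at hg1
        have hg2 : θ' h • v ∈ sumIcc Vs h (d : ℤ) :=
          sumIcc_mono Vs (by omega) le_rfl (Submodule.smul_mem _ _ hv2)
        rw [show h - 1 + 1 = h from by ring]
        exact sub_mem hg1 hg2
      have hv3 : A' v = θ' h • v + (A' v - θ' h • v) := by abel
      rw [hv3]
      exact add_mem (Submodule.mem_sup_left h1) (Submodule.mem_sup_right h2)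
    have hmA : Submodule.map A (⨆ h : ℤ, sumIcc Vs' 0 h ⊓ sumIcc Vs (h + 1) (d : ℤ))
        ≤ ⨆ h : ℤ, sumIcc Vs' 0 h ⊓ sumIcc Vs (h + 1) (d : ℤ) := by
      rw [Submodule.map_iSup]
      refine iSup_le fun h => ?_
      rintro x ⟨v, hv, rfl⟩
      have hsub := sup_le (le_iSup (fun h : ℤ => sumIcc Vs' 0 h ⊓ sumIcc Vs (h + 1) (↑d : ℤ)) h) (le_iSup _ (h + 1))
      exact hsub (hZA h v hv)
    have hmA' : Submodule.map A' (⨆ h : ℤ, sumIcc Vs' 0 h ⊓ sumIcc Vs (h + 1) (d : ℤ))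
        ≤ ⨆ h : ℤ, sumIcc Vs' 0 h ⊓ sumIcc Vs (h + 1) (d : ℤ) := by
      rw [Submodule.map_iSup]
      refine iSup_le fun h => ?_
      rintro x ⟨v, hv, rfl⟩
      have hsub := sup_le (le_iSup (fun h : ℤ => sumIcc Vs' 0 h ⊓ sumIcc Vs (h + 1) (↑d : ℤ)) h) (le_iSup _ (h - 1))
      exact hsub (hZA' h v hv)
    rcases hTD.irred _ hmA hmA' with hbot | htop
    · exact fun h => le_bot_iff.mp ((le_iSup _ h).trans hbot.le)
    · exfalso
      have hZle : (⨆ h : ℤ, sumIcc Vs' 0 h ⊓ sumIcc Vs (h + 1) (d : ℤ))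
          ≤ sumIcc Vs 1 (d : ℤ) := by
        refine iSup_le fun h => ?_
        rcases lt_or_ge h 0 with h0 | h0
        · exact inf_le_left.trans (by rw [sumIcc_bot Vs' h0]; exact bot_le)
        · exact inf_le_right.trans (sumIcc_mono Vs (by omega) le_rfl)
      have hG1top : sumIcc Vs 1 (d : ℤ) = ⊤ := top_unique (htop ▸ hZle)
      have hle2 : sumIcc Vs 1 (d : ℤ) ≤ ⨆ j, ⨆ _ : j ≠ (0 : ℤ), Vs j :=
        sumIcc_le fun j h1 h2 => le_iSup₂_of_le j (by omega) le_rfl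
      have hdisj : Disjoint (Vs 0) (sumIcc Vs 1 (d : ℤ)) :=
        (hTD.decompV.indep 0).mono_right hle2
      rw [hG1top, disjoint_top] at hdisj
      exact hTD.decompV.ne_bot 0 le_rfl (by omega) hdisj
  constructor
  · -- partial sum from below equals F i
    have hle1 : sumIcc (fun j => sumIcc Vs' 0 j ⊓ sumIcc Vs j (d : ℤ)) 0 i
        ≤ sumIcc Vs' 0 i :=
      sumIcc_le fun h h1 h2 => inf_le_left.trans (sumIcc_mono Vs' le_rfl h2)
    have htot : sumIcc (fun j => sumIcc Vs' 0 j ⊓ sumIcc Vs j (d : ℤ)) 0 i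
        ⊔ sumIcc Vs (i + 1) (d : ℤ) = ⊤ := by
      refine top_unique ?_
      rw [← hWtop]
      refine iSup_le fun h => ?_
      rcases lt_or_ge h 0 with h0 | h0
      · exact inf_le_left.trans (by rw [sumIcc_bot Vs' h0]; exact bot_le)
      rcases le_or_gt h i with h1 | h1
      · exact (le_sumIcc (fun j => sumIcc Vs' 0 j ⊓ sumIcc Vs j (d : ℤ)) h0 h1).trans
          le_sup_left
      · exact (inf_le_right.trans (sumIcc_mono Vs (by omega) le_rfl)).trans le_sup_right
    have hcalc : sumIcc Vs' 0 i
        = sumIcc (fun j => sumIcc Vs' 0 j ⊓ sumIcc Vs j (d : ℤ)) 0 i := by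
      calc sumIcc Vs' 0 i
          = (sumIcc (fun j => sumIcc Vs' 0 j ⊓ sumIcc Vs j (d : ℤ)) 0 i
              ⊔ sumIcc Vs (i + 1) (d : ℤ)) ⊓ sumIcc Vs' 0 i := by
            rw [htot, top_inf_eq]
        _ = sumIcc (fun j => sumIcc Vs' 0 j ⊓ sumIcc Vs j (d : ℤ)) 0 i
              ⊔ (sumIcc Vs (i + 1) (d : ℤ) ⊓ sumIcc Vs' 0 i) :=
            sup_inf_assoc_of_le _ hle1
        _ = sumIcc (fun j => sumIcc Vs' 0 j ⊓ sumIcc Vs j (d : ℤ)) 0 i := by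
            rw [inf_comm, hZbot i, sup_bot_eq]
    exact hcalc.symm
  · -- partial sum from above equals G i
    have hle2 : sumIcc (fun j => sumIcc Vs' 0 j ⊓ sumIcc Vs j (d : ℤ)) i (d : ℤ)
        ≤ sumIcc Vs i (d : ℤ) :=
      sumIcc_le fun h h1 h2 => inf_le_right.trans (sumIcc_mono Vs h1 le_rfl)
    have htot : sumIcc (fun j => sumIcc Vs' 0 j ⊓ sumIcc Vs j (d : ℤ)) i (d : ℤ)
        ⊔ sumIcc Vs' 0 (i - 1) = ⊤ := by
      refine top_unique ?_
      rw [← hWtop]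
      refine iSup_le fun h => ?_
      rcases lt_or_ge h i with h1 | h1
      · exact (inf_le_left.trans (sumIcc_mono Vs' le_rfl (by omega))).trans le_sup_right
      rcases le_or_gt h (d : ℤ) with h2 | h2
      · exact (le_sumIcc (fun j => sumIcc Vs' 0 j ⊓ sumIcc Vs j (d : ℤ)) h1 h2).trans
          le_sup_left
      · exact inf_le_right.trans (by rw [sumIcc_bot Vs h2]; exact bot_le)
    have hz : sumIcc Vs' 0 (i - 1) ⊓ sumIcc Vs i (d : ℤ) = ⊥ := by
      have := hZbot (i - 1)
      rwa [show i - 1 + 1 = i from by ring] at this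
    have hcalc : sumIcc Vs i (d : ℤ)
        = sumIcc (fun j => sumIcc Vs' 0 j ⊓ sumIcc Vs j (d : ℤ)) i (d : ℤ) := by
      calc sumIcc Vs i (d : ℤ)
          = (sumIcc (fun j => sumIcc Vs' 0 j ⊓ sumIcc Vs j (d : ℤ)) i (d : ℤ)
              ⊔ sumIcc Vs' 0 (i - 1)) ⊓ sumIcc Vs i (d : ℤ) := by
            rw [htot, top_inf_eq]
        _ = sumIcc (fun j => sumIcc Vs' 0 j ⊓ sumIcc Vs j (d : ℤ)) i (d : ℤ)
              ⊔ (sumIcc Vs' 0 (i - 1) ⊓ sumIcc Vs i (d : ℤ)) :=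
            sup_inf_assoc_of_le _ hle2
        _ = sumIcc (fun j => sumIcc Vs' 0 j ⊓ sumIcc Vs j (d : ℤ)) i (d : ℤ) := by
            rw [hz, sup_bot_eq]
    exact hcalc.symm

end Aux

/-- partial sums of the six decompositions. -/
theorem stmt3 {K : Type*} [Field K] [IsAlgClosed K]
    {V : Type*} [AddCommGroup V] [Module K V] [FiniteDimensional K V] [Nontrivial V]
    (q : K) (hq0 : q ≠ 0) (hq : ∀ n : ℕ, 0 < n → q ^ n ≠ 1)
    (A A' : Module.End K V) (d : ℕ) (Vs Vs' : ℤ → Submodule K V) (θ θ' : ℤ → K)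
    (hTD : IsTridiagonalPair A A' d Vs Vs' θ θ') :
    ∀ i : ℤ, 0 ≤ i → i ≤ (d : ℤ) →
      -- [0D]
      (sumIcc (dec0D Vs) 0 i = sumIcc Vs 0 i ∧
        sumIcc (dec0D Vs) i (d : ℤ) = sumIcc Vs i (d : ℤ)) ∧
      -- [0*D*]
      (sumIcc (dec0sDs Vs') 0 i = sumIcc Vs' 0 i ∧
        sumIcc (dec0sDs Vs') i (d : ℤ) = sumIcc Vs' i (d : ℤ)) ∧
      -- [0*D]
      (sumIcc (dec0sD d Vs Vs') 0 i = sumIcc Vs' 0 i ∧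
        sumIcc (dec0sD d Vs Vs') i (d : ℤ) = sumIcc Vs i (d : ℤ)) ∧
      -- [0*0]
      (sumIcc (dec0s0 d Vs Vs') 0 i = sumIcc Vs' 0 i ∧
        sumIcc (dec0s0 d Vs Vs') i (d : ℤ) = sumIcc Vs 0 ((d : ℤ) - i)) ∧
      -- [D*0]
      (sumIcc (decDs0 d Vs Vs') 0 i = sumIcc Vs' ((d : ℤ) - i) (d : ℤ) ∧
        sumIcc (decDs0 d Vs Vs') i (d : ℤ) = sumIcc Vs 0 ((d : ℤ) - i)) ∧
      -- [D*D]
      (sumIcc (decDsD d Vs Vs') 0 i = sumIcc Vs' ((d : ℤ) - i) (d : ℤ) ∧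
        sumIcc (decDsD d Vs Vs') i (d : ℤ) = sumIcc Vs i (d : ℤ)) := by
  intro i hi0 hid
  obtain ⟨S1a, S1b⟩ := splitLemma hTD i hi0 hid
  obtain ⟨S2a, S2b⟩ := splitLemma hTD.revV i hi0 hid
  obtain ⟨S3a, S3b⟩ := splitLemma hTD.revV' i hi0 hid
  obtain ⟨S4a, S4b⟩ := splitLemma hTD.revV.revV' i hi0 hid
  refine ⟨⟨rfl, rfl⟩, ⟨rfl, rfl⟩, ⟨S1a, S1b⟩, ?_, ?_, ?_⟩
  · -- [0*0]
    have e : dec0s0 d Vs Vs'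
        = fun j => sumIcc Vs' 0 j ⊓ sumIcc (fun k => Vs ((d : ℤ) - k)) j (d : ℤ) :=
      funext fun j => by
        simp only [dec0s0]
        rw [sumIcc_reflect, sub_self]
    have h2b : sumIcc (fun j => Vs ((d : ℤ) - j)) i (d : ℤ) = sumIcc Vs 0 ((d : ℤ) - i) := by
      rw [sumIcc_reflect, sub_self]
    exact ⟨by rw [e]; exact S2a, by rw [e]; exact S2b.trans h2b⟩
  · -- [D*0]
    have e : decDs0 d Vs Vs'
        = fun j => sumIcc (fun k => Vs' ((d : ℤ) - k)) 0 j
            ⊓ sumIcc (fun k => Vs ((d : ℤ) - k)) j (d : ℤ) :=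
      funext fun j => by
        simp only [decDs0]
        rw [sumIcc_reflect, sumIcc_reflect, sub_zero, sub_self]
    have h4a : sumIcc (fun j => Vs' ((d : ℤ) - j)) 0 i = sumIcc Vs' ((d : ℤ) - i) (d : ℤ) := by
      rw [sumIcc_reflect, sub_zero]
    have h4b : sumIcc (fun j => Vs ((d : ℤ) - j)) i (d : ℤ) = sumIcc Vs 0 ((d : ℤ) - i) := by
      rw [sumIcc_reflect, sub_self]
    exact ⟨by rw [e]; exact S4a.trans h4a, by rw [e]; exact S4b.trans h4b⟩
  · -- [D*D]
    have e : decDsD d Vs Vs'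
        = fun j => sumIcc (fun k => Vs' ((d : ℤ) - k)) 0 j ⊓ sumIcc Vs j (d : ℤ) :=
      funext fun j => by
        simp only [decDsD]
        rw [sumIcc_reflect, sub_zero]
    have h3a : sumIcc (fun j => Vs' ((d : ℤ) - j)) 0 i = sumIcc Vs' ((d : ℤ) - i) (d : ℤ) := by
      rw [sumIcc_reflect, sub_zero]
    exact ⟨by rw [e]; exact S3a.trans h3a, by rw [e]; exact S3b⟩
end
end

section
/- Let U_0, …, U_d denote any one of the six decompositions [0D], [0*D*], [0*D], [0*0], [D*0], [D*D] of V. Then for 0 ≤ i ≤ d the actions of B and B* on U_i satisfy: for [0D]: (B − bq^{d−2i}I)U_i ⊆ U_{i−1} and (B* − b*q^{d−2i}I)U_i ⊆ U_{i+1}; for [0*D*]: (B − bq^{2i−d}I)U_i ⊆ U_{i−1} and (B* − b*q^{2i−d}I)U_i ⊆ U_{i+1}; for [0*D]: (B − bq^{2i−d}I)U_i ⊆ U_{i−1} and (B* − b*q^{d−2i}I)U_i ⊆ U_{i+1}; for [0*0]: (B − bq^{2i−d}I)U_i = 0 and B*U_i ⊆ U_{i−1} + U_i + U_{i+1}; for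 [D*0]: (B − bq^{2i−d}I)U_i ⊆ U_{i+1} and (B* − b*q^{d−2i}I)U_i ⊆ U_{i−1}; for [D*D]: BU_i ⊆ U_{i−1} + U_i + U_{i+1} and (B* − b*q^{d−2i}I)U_i = 0. -/
noncomputable section

open Submodule

variable {K : Type*} [Field K]

variable {V : Type*} [AddCommGroup V] [Module K V]

/-!
On `[0*0]_i` the map `B` is the scalar `b q^{2i-d}`, while `A - θ_{d-i}` maps `[0*0]_i` into
`[0*0]_{i+1}` and `A* - θ*_i` maps it into `[0*0]_{i-1}`. Since the `[0*0]_i` span `V` (by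
irreducibility), this yields the `q`-Weyl relations `q A B - q⁻¹ B A = (q - q⁻¹) a b` and
`q B A* - q⁻¹ A* B = (q - q⁻¹) a* b`. By these relations `B - b q^{d-2i}` sends an eigenvector
of `A` for `θ_i` to one for `q^{-2} θ_i = θ_{i-1}`, so `B` is lower bidiagonal with respect to
`V_0, …, V_d`, and likewise with respect to `V*_0, …, V*_d`; its action on the flags
`V_0 + ⋯ + V_j`, `V*_0 + ⋯ + V*_j`, … and on their intersections follows.

Reversing both standard orderings and replacing `q` by `q⁻¹` preserves all hypotheses and
exchanges `B` with `B*`, `[0*0]` with `[D*D]` and `[0*D]` with `[D*0]`; this gives the claims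
about `B*`. Finally `B*[0*0]_i` lies in `(V*_0 + ⋯ + V*_{i+1}) ∩ (V_0 + ⋯ + V_{d-i+1})`, a
`B`-invariant subspace meeting `[0*0]_k` trivially for `|k - i| > 1`; as `B` is diagonalizable
with eigenspaces `[0*0]_k`, it lies in `[0*0]_{i-1} + [0*0]_i + [0*0]_{i+1}`.
-/

open Function Module.End

theorem zpow_injective_of_pow_ne_one {q : K} (hq0 : q ≠ 0)
    (hq : ∀ n : ℕ, 0 < n → q ^ n ≠ 1) : Injective (q ^ · : ℤ → K) := by
  have : ¬IsOfFinOrder (Units.mk0 q hq0) := by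
    rw [isOfFinOrder_iff_pow_eq_one]
    rintro ⟨n, hn, h⟩
    exact hq n hn (by simpa [Units.ext_iff] using h)
  exact fun m n h => injective_zpow_iff_not_isOfFinOrder.2 this (Units.ext (by simpa using h))

theorem ne_zero_of_zpow_injective {q : K} (hq : Injective (q ^ · : ℤ → K)) : q ≠ 0 := by
  rintro rfl
  exact absurd (@hq 1 2 (by simp)) (by norm_num)

theorem zpow_injective_inv {q : K} (hq : Injective (q ^ · : ℤ → K)) :
    Injective (q⁻¹ ^ · : ℤ → K) := fun m n h =>
  neg_injective (hq (by simpa only [inv_zpow'] using h))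

theorem injective_mul_zpow {q c : K} (hc : c ≠ 0) (hq : Injective (q ^ · : ℤ → K))
    {e : ℤ → ℤ} (he : Injective e) : Injective fun i => c * q ^ e i :=
  fun _ _ h => he (hq (mul_left_cancel₀ hc h))

section Eigenspace

variable {ι : Type*} {f : Module.End K V} {U : ι → Submodule K V} {μ : ι → K}

theorem map_sub_smul_one_le_iff {c : K} {S T : Submodule K V} :
    S.map (f - c • 1) ≤ T ↔ ∀ v ∈ S, f v - c • v ∈ T := by
  simp [SetLike.le_def]

theorem map_sub_smul_one_eq_bot {c : K} {S : Submodule K V} (h : S ≤ f.eigenspace c) :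
    S.map (f - c • 1) = ⊥ :=
  LinearMap.le_ker_iff_map.1 (eigenspace_def (f := f) ▸ h)

theorem eigenspace_eq_of_iSup_eq_top (hμ : Injective μ) (htop : ⨆ i, U i = ⊤)
    (hU : ∀ i, U i ≤ f.eigenspace (μ i)) (i : ι) : f.eigenspace (μ i) = U i :=
  congrFun (((f.eigenspaces_iSupIndep.comp hμ).le_iff_eq_of_iSup_eq_top htop).1 hU).symm i

theorem eigenspace_eq_bot_of_notMem_range (htop : ⨆ i, U i = ⊤)
    (hU : ∀ i, U i ≤ f.eigenspace (μ i)) {ν : K} (hν : ν ∉ Set.range μ) :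
    f.eigenspace ν = ⊥ := by
  have hrest : ⨆ ν' ≠ ν, f.eigenspace ν' = ⊤ :=
    top_le_iff.1 <| htop ▸ iSup_le fun i =>
      (hU i).trans (le_iSup₂_of_le (μ i) (fun h => hν ⟨i, h⟩) le_rfl)
  simpa [hrest] using f.eigenspaces_iSupIndep ν

theorem le_biSup_of_invariant [FiniteDimensional K V] (hμ : Injective μ) (htop : ⨆ i, U i = ⊤)
    (hU : ∀ i, U i ≤ f.eigenspace (μ i)) {W : Submodule K V} (hW : ∀ x ∈ W, f x ∈ W)
    {s : Set ι} (hs : ∀ i ∉ s, Disjoint W (U i)) : W ≤ ⨆ i ∈ s, U i := by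
  have hall : ⨆ ν, f.eigenspace ν = ⊤ :=
    top_le_iff.1 <| htop ▸ iSup_le fun i => (hU i).trans (le_iSup _ (μ i))
  have hsplit : W = ⨆ ν, W ⊓ f.eigenspace ν := by
    simpa [hall] using W.inf_iSup_genEigenspace hW 1
  rw [hsplit]
  refine iSup_le fun ν => ?_
  by_cases hν : ν ∈ Set.range μ
  · obtain ⟨i, rfl⟩ := hν
    rw [eigenspace_eq_of_iSup_eq_top hμ htop hU i]
    by_cases hi : i ∈ s
    · exact inf_le_right.trans (le_biSup U hi)
    · simp [(hs i hi).eq_bot]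
  · simp [eigenspace_eq_bot_of_notMem_range htop hU hν]

theorem map_iSup_le_of_sub_smul_mem {c : ι → K} (next : ι → ι)
    (h : ∀ i, ∀ v ∈ U i, f v - c i • v ∈ U (next i)) :
    (⨆ i, U i).map f ≤ ⨆ i, U i := by
  rw [Submodule.map_iSup]
  refine iSup_le fun i => Submodule.map_le_iff_le_comap.2 fun v hv => ?_
  rw [Submodule.mem_comap, ← sub_add_cancel (f v) (c i • v)]
  exact add_mem (le_iSup U (next i) (h i v hv)) (Submodule.smul_mem _ _ (le_iSup U i hv))

theorem qWeyl_of_raising {X Y : Module.End K V} {q c : K} (hq : q ≠ 0) (htop : ⨆ i, U i = ⊤)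
    (next : ι → ι) {x y : ι → K} (hY : ∀ i, U i ≤ Y.eigenspace (y i))
    (hX : ∀ i, ∀ v ∈ U i, X v - x i • v ∈ U (next i))
    (hxy : ∀ i, x i * y i = c) (hy : ∀ i, y (next i) = q ^ 2 * y i) :
    q • (X * Y) - q⁻¹ • (Y * X) = ((q - q⁻¹) * c) • 1 := by
  rw [← sub_eq_zero, ← LinearMap.ker_eq_top, eq_top_iff, ← htop]
  refine iSup_le fun i v hv => ?_
  have hYv := mem_eigenspace_iff.1 (hY i hv)
  have hYr := mem_eigenspace_iff.1 (hY (next i) (hX i v hv))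
  obtain ⟨r, hr⟩ : ∃ r, X v = r + x i • v := ⟨X v - x i • v, by abel⟩
  rw [hr, add_sub_cancel_right, hy] at hYr
  rw [← hxy i]
  simp only [LinearMap.mem_ker, LinearMap.sub_apply, LinearMap.smul_apply, Module.End.mul_apply,
    Module.End.one_apply, hYv, map_smul, hr, map_add, hYr]
  match_scalars <;> field_simp <;> ring

theorem sub_smul_mem_eigenspace_of_qWeyl {X Y : Module.End K V} {q x y : K} (hq : q ≠ 0)
    (h : q • (X * Y) - q⁻¹ • (Y * X) = ((q - q⁻¹) * (x * y)) • 1) {v : V}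
    (hv : v ∈ X.eigenspace x) : Y v - y • v ∈ X.eigenspace ((q ^ 2)⁻¹ * x) := by
  rw [mem_eigenspace_iff] at hv ⊢
  have hv' := LinearMap.congr_fun h v
  simp only [LinearMap.sub_apply, LinearMap.smul_apply, Module.End.mul_apply,
    Module.End.one_apply, hv, map_smul] at hv'
  rw [map_sub, map_smul, hv]
  linear_combination (norm := skip) q⁻¹ • hv'
  match_scalars <;> field_simp <;> ring

end Eigenspace

theorem le_eigenspace_of_eq_bot {U : ℤ → Submodule K V} {f : Module.End K V} {μ : ℤ → K}
    {d : ℕ} (hbot : ∀ i, (i < 0 ∨ (d : ℤ) < i) → U i = ⊥)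
    (h : ∀ i, 0 ≤ i → i ≤ (d : ℤ) → ∀ v ∈ U i, f v = μ i • v) (i : ℤ) :
    U i ≤ f.eigenspace (μ i) := by
  by_cases hi : 0 ≤ i ∧ i ≤ (d : ℤ)
  · exact fun v hv => mem_eigenspace_iff.2 (h i hi.1 hi.2 v hv)
  · rw [hbot i (by omega)]; exact bot_le

section SumIcc

variable {U : ℤ → Submodule K V} {f : Module.End K V} {m n : ℤ} {v : V}

theorem le_sumIcc_s6 {j : ℤ} (hm : m ≤ j) (hn : j ≤ n) : U j ≤ sumIcc U m n :=
  le_biSup U ⟨hm, hn⟩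

theorem sumIcc_le_iff {W : Submodule K V} :
    sumIcc U m n ≤ W ↔ ∀ j, m ≤ j → j ≤ n → U j ≤ W :=
  ⟨fun h _ hm hn => (le_sumIcc_s6 hm hn).trans h, fun h => iSup₂_le fun j hj => h j hj.1 hj.2⟩

theorem sumIcc_mono_s6 {m' n' : ℤ} (hm : m' ≤ m) (hn : n ≤ n') :
    sumIcc U m n ≤ sumIcc U m' n' :=
  biSup_mono fun _ hj => ⟨hm.trans hj.1, hj.2.trans hn⟩

theorem sumIcc_eq_bot (h : n < m) : sumIcc U m n = ⊥ := by
  simp [sumIcc, Set.Icc_eq_empty_of_lt h]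

theorem sumIcc_sub_one_add_one (i : ℤ) :
    sumIcc U (i - 1) (i + 1) = U (i - 1) ⊔ U i ⊔ U (i + 1) := by
  refine le_antisymm (sumIcc_le_iff.2 fun j hm hn => ?_)
    (sup_le (sup_le (le_sumIcc_s6 le_rfl (by omega)) (le_sumIcc_s6 (by omega) (by omega)))
      (le_sumIcc_s6 (by omega) le_rfl))
  obtain rfl | rfl | rfl : j = i - 1 ∨ j = i ∨ j = i + 1 := by omega
  · exact le_sup_left.trans le_sup_left
  · exact le_sup_right.trans le_sup_left
  · exact le_sup_right

theorem apply_mem_sumIcc {lo hi : ℤ → ℤ} (hlo : Monotone lo) (hhi : Monotone hi)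
    (hf : ∀ j, ∀ w ∈ U j, f w ∈ sumIcc U (lo j) (hi j)) (hv : v ∈ sumIcc U m n) :
    f v ∈ sumIcc U (lo m) (hi n) := by
  have : sumIcc U m n ≤ (sumIcc U (lo m) (hi n)).comap f :=
    sumIcc_le_iff.2 fun j hm hn w hw => sumIcc_mono_s6 (hlo hm) (hhi hn) (hf j w hw)
  exact this hv

theorem apply_mem_sumIcc_of_tridiagonal
    (hf : ∀ j, (U j).map f ≤ U (j - 1) ⊔ U j ⊔ U (j + 1)) (hv : v ∈ sumIcc U m n) :
    f v ∈ sumIcc U (m - 1) (n + 1) :=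
  apply_mem_sumIcc (lo := (· - 1)) (hi := (· + 1)) (fun _ _ h => by simpa using h)
    (fun _ _ h => by simpa using h)
    (fun j _ hw => (sumIcc_sub_one_add_one (U := U) j).symm ▸ hf j ⟨_, hw, rfl⟩) hv

theorem sub_smul_mem_sumIcc {s : ℤ → K}
    (hf : ∀ j, ∀ w ∈ U j, f w - s j • w ∈ U (j - 1)) (hv : v ∈ sumIcc U m n) :
    f v - s n • v ∈ sumIcc U (m - 1) (n - 1) := by
  have : sumIcc U m n ≤ (sumIcc U (m - 1) (n - 1)).comap (f - s n • 1) := by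
    refine sumIcc_le_iff.2 fun j hm hn w hw => ?_
    have hsplit : (f - s n • 1) w = (f w - s j • w) + (s j - s n) • w := by
      simp only [LinearMap.sub_apply, LinearMap.smul_apply, Module.End.one_apply]
      module
    rw [Submodule.mem_comap, hsplit]
    refine add_mem (le_sumIcc_s6 (by omega) (by omega) (hf j w hw)) ?_
    rcases hn.eq_or_lt with rfl | hlt
    · simp
    · exact le_sumIcc_s6 (by omega) (by omega) (Submodule.smul_mem _ _ hw)
  simpa using this hv

theorem apply_mem_sumIcc_of_lowering {s : ℤ → K}
    (hf : ∀ j, ∀ w ∈ U j, f w - s j • w ∈ U (j - 1)) (hv : v ∈ sumIcc U m n) :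
    f v ∈ sumIcc U (m - 1) n := by
  refine apply_mem_sumIcc (lo := (· - 1)) (hi := fun j => j)
    (fun _ _ h => by simpa using h) (fun _ _ h => h) (fun j w hw => ?_) hv
  rw [← sub_add_cancel (f w) (s j • w)]
  exact add_mem (le_sumIcc_s6 le_rfl (by omega) (hf j w hw))
    (Submodule.smul_mem _ _ (le_sumIcc_s6 (by omega) le_rfl hw))

theorem IsDecomposition.sumIcc_le_sumIcc_zero {d : ℕ} (hU : IsDecomposition d U) (m n : ℤ) :
    sumIcc U m n ≤ sumIcc U 0 n :=
  sumIcc_le_iff.2 fun j _ hn => if h : 0 ≤ j then le_sumIcc_s6 h hn else by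
    rw [hU.bot_of_lt j (by omega)]; exact bot_le

theorem IsDecomposition.sumIcc_eq_top {d : ℕ} (hU : IsDecomposition d U) :
    sumIcc U 0 d = ⊤ := by
  refine eq_top_iff.2 (hU.sup_eq_top ▸ iSup_le fun j => ?_)
  by_cases h : 0 ≤ j ∧ j ≤ d
  · exact le_sumIcc_s6 h.1 h.2
  · rcases not_and_or.1 h with h | h
    · rw [hU.bot_of_lt j (by omega)]; exact bot_le
    · rw [hU.bot_of_gt j (by omega)]; exact bot_le

theorem dec0s0_eq_bot {d : ℕ} {Vs Vs' : ℤ → Submodule K V} {i : ℤ}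
    (hi : i < 0 ∨ (d : ℤ) < i) :
    dec0s0 d Vs Vs' i = ⊥ := by
  rcases hi with hi | hi
  · rw [dec0s0, sumIcc_eq_bot hi, bot_inf_eq]
  · rw [dec0s0, sumIcc_eq_bot (show (d : ℤ) - i < 0 by omega), inf_bot_eq]

theorem decDsD_eq_bot {d : ℕ} {Vs Vs' : ℤ → Submodule K V} {i : ℤ}
    (hi : i < 0 ∨ (d : ℤ) < i) :
    decDsD d Vs Vs' i = ⊥ := by
  rcases hi with hi | hi
  · rw [decDsD, sumIcc_eq_bot (show (d : ℤ) < d - i by omega), bot_inf_eq]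
  · rw [decDsD, sumIcc_eq_bot hi, inf_bot_eq]

end SumIcc

section Reflect

def reflect {α : Type*} (d : ℕ) (g : ℤ → α) (i : ℤ) : α := g (d - i)

variable {U Vs Vs' : ℤ → Submodule K V} {d : ℕ}

@[simp]
theorem reflect_reflect {α : Type*} (g : ℤ → α) : reflect d (reflect d g) = g := by
  funext i; simp [reflect]

theorem sumIcc_reflect_s6 (m n : ℤ) : sumIcc (reflect d U) m n = sumIcc U (d - n) (d - m) :=
  le_antisymm
    (sumIcc_le_iff.2 fun j hm hn => le_sumIcc_s6 (U := U) (j := d - j) (by omega) (by omega))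
    (sumIcc_le_iff.2 fun j hm hn => by
      have := le_sumIcc_s6 (U := reflect d U) (j := d - j) (m := m) (n := n) (by omega) (by omega)
      rwa [reflect, sub_sub_cancel] at this)

theorem dec0s0_reflect : dec0s0 d (reflect d Vs) (reflect d Vs') = decDsD d Vs Vs' := by
  funext i; simp [dec0s0, decDsD, sumIcc_reflect_s6]

theorem dec0sD_reflect : dec0sD d (reflect d Vs) (reflect d Vs') = decDs0 d Vs Vs' := by
  funext i; simp [dec0sD, decDs0, sumIcc_reflect_s6]

theorem decDs0_reflect : decDs0 d (reflect d Vs) (reflect d Vs') = dec0sD d Vs Vs' := by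
  funext i; simp [dec0sD, decDs0, sumIcc_reflect_s6]

theorem dec0s0_reflect_le_eigenspace {q b' : K} {B' : Module.End K V}
    (hB' : ∀ i, decDsD d Vs Vs' i ≤ B'.eigenspace (b' * q ^ (d - 2 * i))) (i : ℤ) :
    dec0s0 d (reflect d Vs) (reflect d Vs') i ≤ B'.eigenspace (b' * q⁻¹ ^ (2 * i - d)) := by
  rw [dec0s0_reflect, inv_zpow', neg_sub]
  exact hB' i

theorem IsDecomposition.reflect (hU : IsDecomposition d U) : IsDecomposition d (reflect d U) where
  bot_of_lt i hi := hU.bot_of_gt _ (by omega)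
  bot_of_gt i hi := hU.bot_of_lt _ (by omega)
  ne_bot i h0 hd := hU.ne_bot _ (by omega) (by omega)
  indep := hU.indep.comp fun i j h => by simpa using h
  sup_eq_top := (Equiv.subLeft (d : ℤ)).iSup_comp (g := U) ▸ hU.sup_eq_top

theorem apply_mem_sumIcc_reflect {f : Module.End K V}
    (hf : ∀ {m n : ℤ} {v : V}, v ∈ sumIcc U m n → f v ∈ sumIcc U (m - 1) n)
    {m n : ℤ} {v : V}
    (hv : v ∈ sumIcc (reflect d U) m n) : f v ∈ sumIcc (reflect d U) m (n + 1) := by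
  rw [sumIcc_reflect_s6] at hv ⊢
  exact sumIcc_mono_s6 (by omega) le_rfl (hf hv)

theorem IsTridiagonalPair.reflect {A A' : Module.End K V} {θ θ' : ℤ → K}
    (h : IsTridiagonalPair A A' d Vs Vs' θ θ') :
    IsTridiagonalPair A A' d (reflect d Vs) (reflect d Vs') (reflect d θ) (reflect d θ') where
  decompV := h.decompV.reflect
  decompV' := h.decompV'.reflect
  eig i := h.eig (d - i)
  eig' i := h.eig' (d - i)
  theta_inj i j h0 hd h0' hd' hij := by
    have := h.theta_inj _ _ (by omega) (by omega) (by omega) (by omega) hij; omega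
  theta'_inj i j h0 hd h0' hd' hij := by
    have := h.theta'_inj _ _ (by omega) (by omega) (by omega) (by omega) hij; omega
  trid i := (h.trid (d - i)).trans_eq <| by
    simp only [_root_.reflect, show (d : ℤ) - (i - 1) = d - i + 1 by ring,
      show (d : ℤ) - (i + 1) = d - i - 1 by ring]
    ac_rfl
  trid' i := (h.trid' (d - i)).trans_eq <| by
    simp only [_root_.reflect, show (d : ℤ) - (i - 1) = d - i + 1 by ring,
      show (d : ℤ) - (i + 1) = d - i - 1 by ring]
    ac_rfl
  irred := h.irred

end Reflect

namespace IsTridiagonalPair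

variable {A A' : Module.End K V} {d : ℕ} {Vs Vs' : ℤ → Submodule K V} {θ θ' : ℤ → K}
  {i : ℤ} {v : V}

theorem sub_smul_mem_dec0s0_succ (h : IsTridiagonalPair A A' d Vs Vs' θ θ')
    (hv : v ∈ dec0s0 d Vs Vs' i) : A v - θ (d - i) • v ∈ dec0s0 d Vs Vs' (i + 1) := by
  obtain ⟨hv', hv⟩ := Submodule.mem_inf.1 hv
  refine Submodule.mem_inf.2 ⟨sub_mem ?_ ?_, ?_⟩
  · exact h.decompV'.sumIcc_le_sumIcc_zero _ _
      (apply_mem_sumIcc_of_tridiagonal h.trid' hv')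
  · exact Submodule.smul_mem _ _ (sumIcc_mono_s6 le_rfl (by omega) hv')
  · have := sub_smul_mem_sumIcc (s := θ)
      (fun j w hw => by rw [h.eig j w hw, sub_self]; exact zero_mem _) hv
    exact sumIcc_mono_s6 le_rfl (by omega) (h.decompV.sumIcc_le_sumIcc_zero _ _ this)

theorem sub_smul_mem_dec0s0_pred (h : IsTridiagonalPair A A' d Vs Vs' θ θ')
    (hv : v ∈ dec0s0 d Vs Vs' i) : A' v - θ' i • v ∈ dec0s0 d Vs Vs' (i - 1) := by
  obtain ⟨hv', hv⟩ := Submodule.mem_inf.1 hv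
  refine Submodule.mem_inf.2 ⟨?_, sub_mem ?_ ?_⟩
  · have := sub_smul_mem_sumIcc (s := θ')
      (fun j w hw => by rw [h.eig' j w hw, sub_self]; exact zero_mem _) hv'
    exact h.decompV'.sumIcc_le_sumIcc_zero _ _ this
  · exact sumIcc_mono_s6 le_rfl (by omega)
      (h.decompV.sumIcc_le_sumIcc_zero _ _ (apply_mem_sumIcc_of_tridiagonal h.trid hv))
  · exact Submodule.smul_mem _ _ (sumIcc_mono_s6 le_rfl (by omega) hv)

theorem iSup_dec0s0 (h : IsTridiagonalPair A A' d Vs Vs' θ θ') :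
    ⨆ i, dec0s0 d Vs Vs' i = ⊤ := by
  set W := ⨆ i, dec0s0 d Vs Vs' i
  have hA : W.map A ≤ W := map_iSup_le_of_sub_smul_mem (· + 1) fun _ _ =>
    h.sub_smul_mem_dec0s0_succ
  have hA' : W.map A' ≤ W := map_iSup_le_of_sub_smul_mem (· - 1) fun _ _ =>
    h.sub_smul_mem_dec0s0_pred
  refine (h.irred W hA hA').resolve_left fun hW => h.decompV'.ne_bot 0 le_rfl (by omega) ?_
  refine le_bot_iff.1 (hW ▸ le_iSup_of_le 0 (le_inf (le_sumIcc_s6 le_rfl le_rfl) ?_))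
  simp [h.decompV.sumIcc_eq_top]

end IsTridiagonalPair

/-- The eigenvalue formulas `θ_i = a q^{2i-d}`, `θ*_i = a* q^{d-2i}` are imposed for all
`i : ℤ`, which is harmless since the eigenspaces vanish outside `[0, d]`. -/
structure IsQGeometricTDPair (q a a' : K) (A A' : Module.End K V) (d : ℕ)
    (Vs Vs' : ℤ → Submodule K V) : Prop
    extends IsTridiagonalPair A A' d Vs Vs' (fun i => a * q ^ (2 * i - d))
      (fun i => a' * q ^ (d - 2 * i)) where
  zpow_injective : Injective (q ^ · : ℤ → K)
  a_ne_zero : a ≠ 0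
  a'_ne_zero : a' ≠ 0

namespace IsQGeometricTDPair

variable {q a a' b : K} {A A' B : Module.End K V} {d : ℕ} {Vs Vs' : ℤ → Submodule K V}

theorem of_isTridiagonalPair {θ θ' : ℤ → K} (h : IsTridiagonalPair A A' d Vs Vs' θ θ')
    (hθ : ∀ i : ℤ, 0 ≤ i → i ≤ (d : ℤ) → θ i = a * q ^ (2 * i - (d : ℤ)))
    (hθ' : ∀ i : ℤ, 0 ≤ i → i ≤ (d : ℤ) → θ' i = a' * q ^ ((d : ℤ) - 2 * i))
    (hq : Injective (q ^ · : ℤ → K)) (ha : a ≠ 0) (ha' : a' ≠ 0) :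
    IsQGeometricTDPair q a a' A A' d Vs Vs' := by
  have heig (i : ℤ) : Vs i ≤ A.eigenspace (a * q ^ (2 * i - d)) :=
    le_eigenspace_of_eq_bot (μ := fun i => a * q ^ (2 * i - d))
      (fun i hi => hi.elim (h.decompV.bot_of_lt i) (h.decompV.bot_of_gt i))
      (fun i h0 hd v hv => by rw [← hθ i h0 hd]; exact h.eig i v hv) i
  have heig' (i : ℤ) : Vs' i ≤ A'.eigenspace (a' * q ^ (d - 2 * i)) :=
    le_eigenspace_of_eq_bot (μ := fun i => a' * q ^ (d - 2 * i))
      (fun i hi => hi.elim (h.decompV'.bot_of_lt i) (h.decompV'.bot_of_gt i))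
      (fun i h0 hd v hv => by rw [← hθ' i h0 hd]; exact h.eig' i v hv) i
  exact
    { h with
      eig := fun i v hv => mem_eigenspace_iff.1 (heig i hv)
      eig' := fun i v hv => mem_eigenspace_iff.1 (heig' i hv)
      theta_inj := fun i j _ _ _ _ hij => injective_mul_zpow ha hq (e := fun i => 2 * i - d)
        (fun _ _ he => by simp only at he; omega) hij
      theta'_inj := fun i j _ _ _ _ hij => injective_mul_zpow ha' hq (e := fun i => d - 2 * i)
        (fun _ _ he => by simp only at he; omega) hij
      zpow_injective := hq
      a_ne_zero := ha
      a'_ne_zero := ha' }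

theorem q_ne_zero (P : IsQGeometricTDPair q a a' A A' d Vs Vs') : q ≠ 0 :=
  ne_zero_of_zpow_injective P.zpow_injective

theorem eigenspace_eq (P : IsQGeometricTDPair q a a' A A' d Vs Vs') (i : ℤ) :
    A.eigenspace (a * q ^ (2 * i - d)) = Vs i :=
  eigenspace_eq_of_iSup_eq_top (μ := fun i : ℤ => a * q ^ (2 * i - d))
    (injective_mul_zpow P.a_ne_zero P.zpow_injective fun _ _ h => by omega) P.decompV.sup_eq_top
    (fun i _ hv => mem_eigenspace_iff.2 (P.eig i _ hv)) i

theorem eigenspace_eq' (P : IsQGeometricTDPair q a a' A A' d Vs Vs') (i : ℤ) :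
    A'.eigenspace (a' * q ^ (d - 2 * i)) = Vs' i :=
  eigenspace_eq_of_iSup_eq_top (μ := fun i : ℤ => a' * q ^ (d - 2 * i))
    (injective_mul_zpow P.a'_ne_zero P.zpow_injective fun _ _ h => by omega)
    P.decompV'.sup_eq_top
    (fun i _ hv => mem_eigenspace_iff.2 (P.eig' i _ hv)) i

protected theorem reflect (P : IsQGeometricTDPair q a a' A A' d Vs Vs') :
    IsQGeometricTDPair q⁻¹ a a' A A' d (reflect d Vs) (reflect d Vs') where
  toIsTridiagonalPair := by
    convert P.toIsTridiagonalPair.reflect using 1 <;> funext i <;>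
      simp only [_root_.reflect, inv_zpow'] <;> ring_nf
  zpow_injective := zpow_injective_inv P.zpow_injective
  a_ne_zero := P.a_ne_zero
  a'_ne_zero := P.a'_ne_zero

theorem qWeyl (P : IsQGeometricTDPair q a a' A A' d Vs Vs')
    (hB : ∀ i, dec0s0 d Vs Vs' i ≤ B.eigenspace (b * q ^ (2 * i - d))) :
    q • (A * B) - q⁻¹ • (B * A) = ((q - q⁻¹) * (a * b)) • 1 := by
  have hq := P.q_ne_zero
  refine qWeyl_of_raising hq P.iSup_dec0s0 (· + 1) (x := fun i => a * q ^ (d - 2 * i)) hB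
    (fun i v hv => ?_) (fun i => ?_) (fun i => ?_)
  · convert P.sub_smul_mem_dec0s0_succ hv using 4
    ring_nf
  · simp only [zpow_sub₀ hq, zpow_mul, zpow_natCast]
    field_simp
  · simp only [mul_add, zpow_sub₀ hq, zpow_add₀ hq, zpow_mul, zpow_natCast, mul_one]
    field_simp

-- `q B A* - q⁻¹ A* B = (q - q⁻¹) a* b`, in the shape of `qWeyl` with `q⁻¹` in place of `q`
theorem qWeyl' (P : IsQGeometricTDPair q a a' A A' d Vs Vs')
    (hB : ∀ i, dec0s0 d Vs Vs' i ≤ B.eigenspace (b * q ^ (2 * i - d))) :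
    q⁻¹ • (A' * B) - q⁻¹⁻¹ • (B * A') = ((q⁻¹ - q⁻¹⁻¹) * (a' * b)) • 1 := by
  have hq := P.q_ne_zero
  refine qWeyl_of_raising (inv_ne_zero hq) P.iSup_dec0s0 (· - 1)
    (x := fun i => a' * q ^ (d - 2 * i)) hB (fun i v hv => P.sub_smul_mem_dec0s0_pred hv)
    (fun i => ?_) (fun i => ?_)
  · simp only [zpow_sub₀ hq, zpow_mul, zpow_natCast]
    field_simp
  · simp only [mul_sub, zpow_sub₀ hq, zpow_mul, zpow_natCast]
    field_simp

theorem sub_smul_mem_pred (P : IsQGeometricTDPair q a a' A A' d Vs Vs')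
    (hB : ∀ i, dec0s0 d Vs Vs' i ≤ B.eigenspace (b * q ^ (2 * i - d))) {j : ℤ} {v : V}
    (hv : v ∈ Vs j) : B v - (b * q ^ (d - 2 * j)) • v ∈ Vs (j - 1) := by
  have hq := P.q_ne_zero
  have hrel : q • (A * B) - q⁻¹ • (B * A) =
      ((q - q⁻¹) * (a * q ^ (2 * j - d) * (b * q ^ (d - 2 * j)))) • 1 := by
    convert P.qWeyl hB using 3
    simp only [zpow_sub₀ hq, zpow_mul, zpow_natCast]
    field_simp
  have := sub_smul_mem_eigenspace_of_qWeyl hq hrel ((P.eigenspace_eq j).symm ▸ hv)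
  rw [← P.eigenspace_eq (j - 1)]
  convert this using 2
  simp only [mul_sub, zpow_sub₀ hq, zpow_mul, zpow_natCast, mul_one]
  field_simp

theorem sub_smul_mem_pred' (P : IsQGeometricTDPair q a a' A A' d Vs Vs')
    (hB : ∀ i, dec0s0 d Vs Vs' i ≤ B.eigenspace (b * q ^ (2 * i - d))) {j : ℤ} {v : V}
    (hv : v ∈ Vs' j) : B v - (b * q ^ (2 * j - d)) • v ∈ Vs' (j - 1) := by
  have hq := P.q_ne_zero
  have hrel : q⁻¹ • (A' * B) - q⁻¹⁻¹ • (B * A') =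
      ((q⁻¹ - q⁻¹⁻¹) * (a' * q ^ (d - 2 * j) * (b * q ^ (2 * j - d)))) • 1 := by
    convert P.qWeyl' hB using 3
    simp only [zpow_sub₀ hq, zpow_mul, zpow_natCast]
    field_simp
  have := sub_smul_mem_eigenspace_of_qWeyl (inv_ne_zero hq) hrel
    ((P.eigenspace_eq' j).symm ▸ hv)
  rw [← P.eigenspace_eq' (j - 1)]
  convert this using 2
  simp only [mul_sub, zpow_sub₀ hq, zpow_mul, zpow_natCast, mul_one]
  field_simp

theorem apply_mem_sumIcc (P : IsQGeometricTDPair q a a' A A' d Vs Vs')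
    (hB : ∀ i, dec0s0 d Vs Vs' i ≤ B.eigenspace (b * q ^ (2 * i - d))) {m n : ℤ} {v : V}
    (hv : v ∈ sumIcc Vs m n) : B v ∈ sumIcc Vs (m - 1) n :=
  apply_mem_sumIcc_of_lowering (fun _ _ hw => P.sub_smul_mem_pred hB hw) hv

theorem apply_mem_sumIcc' (P : IsQGeometricTDPair q a a' A A' d Vs Vs')
    (hB : ∀ i, dec0s0 d Vs Vs' i ≤ B.eigenspace (b * q ^ (2 * i - d))) {m n : ℤ} {v : V}
    (hv : v ∈ sumIcc Vs' m n) : B v ∈ sumIcc Vs' (m - 1) n :=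
  apply_mem_sumIcc_of_lowering (fun _ _ hw => P.sub_smul_mem_pred' hB hw) hv

theorem map_sub_dec0sD_le_pred (P : IsQGeometricTDPair q a a' A A' d Vs Vs')
    (hB : ∀ i, dec0s0 d Vs Vs' i ≤ B.eigenspace (b * q ^ (2 * i - d))) (i : ℤ) :
    (dec0sD d Vs Vs' i).map (B - (b * q ^ (2 * i - d)) • 1) ≤ dec0sD d Vs Vs' (i - 1) := by
  refine map_sub_smul_one_le_iff.2 fun v hv => ?_
  obtain ⟨hv', hv⟩ := Submodule.mem_inf.1 hv
  have := sub_smul_mem_sumIcc (s := fun j => b * q ^ (2 * j - d))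
    (fun _ _ hw => P.sub_smul_mem_pred' hB hw) hv'
  exact Submodule.mem_inf.2 ⟨P.decompV'.sumIcc_le_sumIcc_zero _ _ this, sub_mem
    (P.apply_mem_sumIcc hB hv) (Submodule.smul_mem _ _ (sumIcc_mono_s6 (by omega) le_rfl hv))⟩

theorem map_sub_decDs0_le_succ (P : IsQGeometricTDPair q a a' A A' d Vs Vs')
    (hB : ∀ i, dec0s0 d Vs Vs' i ≤ B.eigenspace (b * q ^ (2 * i - d))) (i : ℤ) :
    (decDs0 d Vs Vs' i).map (B - (b * q ^ (2 * i - d)) • 1) ≤ decDs0 d Vs Vs' (i + 1) := by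
  refine map_sub_smul_one_le_iff.2 fun v hv => ?_
  obtain ⟨hv', hv⟩ := Submodule.mem_inf.1 hv
  refine Submodule.mem_inf.2
    ⟨sub_mem (sumIcc_mono_s6 (by omega) le_rfl (P.apply_mem_sumIcc' hB hv'))
      (Submodule.smul_mem _ _ (sumIcc_mono_s6 (by omega) le_rfl hv')), ?_⟩
  have := sub_smul_mem_sumIcc (s := fun j => b * q ^ (d - 2 * j))
    (fun _ _ hw => P.sub_smul_mem_pred hB hw) hv
  rw [show (d : ℤ) - 2 * (d - i) = 2 * i - d by ring] at this
  exact sumIcc_mono_s6 le_rfl (by omega) (P.decompV.sumIcc_le_sumIcc_zero _ _ this)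

theorem map_dec0s0_le [FiniteDimensional K V] (P : IsQGeometricTDPair q a a' A A' d Vs Vs')
    (hB : ∀ i, dec0s0 d Vs Vs' i ≤ B.eigenspace (b * q ^ (2 * i - d))) (hb : b ≠ 0)
    {B' : Module.End K V}
    (hVs : ∀ {m n : ℤ} {v : V}, v ∈ sumIcc Vs m n → B' v ∈ sumIcc Vs m (n + 1))
    (hVs' : ∀ {m n : ℤ} {v : V}, v ∈ sumIcc Vs' m n → B' v ∈ sumIcc Vs' m (n + 1))
    (i : ℤ) :
    (dec0s0 d Vs Vs' i).map B' ≤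
      dec0s0 d Vs Vs' (i - 1) ⊔ dec0s0 d Vs Vs' i ⊔ dec0s0 d Vs Vs' (i + 1) := by
  have hβ : Injective fun i : ℤ => b * q ^ (2 * i - d) :=
    injective_mul_zpow hb P.zpow_injective fun _ _ h => by omega
  have hdisj : Pairwise (Disjoint on dec0s0 d Vs Vs') :=
    ((B.eigenspaces_iSupIndep.comp hβ).mono hB).pairwiseDisjoint
  set W := sumIcc Vs' 0 (i + 1) ⊓ sumIcc Vs 0 (d - i + 1)
  have hW : ∀ x ∈ W, B x ∈ W := fun x hx =>
    ⟨P.decompV'.sumIcc_le_sumIcc_zero _ _ (P.apply_mem_sumIcc' hB hx.1),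
      P.decompV.sumIcc_le_sumIcc_zero _ _ (P.apply_mem_sumIcc hB hx.2)⟩
  -- for `k < i - 1` (`k > i + 1`), `W ⊓ [0*0]_k` lies in `[0*0]_{i-1}` (`[0*0]_{i+1}`)
  have hWk : ∀ k ∉ Set.Icc (i - 1) (i + 1), Disjoint W (dec0s0 d Vs Vs' k) := by
    intro k hk
    obtain ⟨j, hj, hWj⟩ : ∃ j, j ≠ k ∧ W ⊓ dec0s0 d Vs Vs' k ≤ dec0s0 d Vs Vs' j := by
      rcases not_and_or.1 hk with hk | hk
      · exact ⟨i - 1, by omega, fun x hx => ⟨sumIcc_mono_s6 le_rfl (by omega) hx.2.1,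
          sumIcc_mono_s6 le_rfl (by omega) hx.1.2⟩⟩
      · exact ⟨i + 1, by omega, fun x hx => ⟨hx.1.1, sumIcc_mono_s6 le_rfl (by omega) hx.2.2⟩⟩
    exact disjoint_iff.2 (le_bot_iff.1 ((le_inf hWj inf_le_right).trans (hdisj hj).le_bot))
  rintro _ ⟨v, hv, rfl⟩
  have hBv : B' v ∈ W := ⟨hVs' hv.1, sumIcc_mono_s6 le_rfl (by omega) (hVs hv.2)⟩
  rw [← sumIcc_sub_one_add_one]
  exact le_biSup_of_invariant hβ P.iSup_dec0s0 hB hW hWk hBv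

variable {b' : K} {B' : Module.End K V}

theorem sub_smul_mem_succ (P : IsQGeometricTDPair q a a' A A' d Vs Vs')
    (hB' : ∀ i, decDsD d Vs Vs' i ≤ B'.eigenspace (b' * q ^ (d - 2 * i))) {j : ℤ} {v : V}
    (hv : v ∈ Vs j) : B' v - (b' * q ^ (d - 2 * j)) • v ∈ Vs (j + 1) := by
  have := P.reflect.sub_smul_mem_pred (dec0s0_reflect_le_eigenspace hB') (j := d - j)
    (by rwa [reflect, sub_sub_cancel])
  rw [reflect, inv_zpow'] at this
  convert this using 4 <;> ring_nf

theorem sub_smul_mem_succ' (P : IsQGeometricTDPair q a a' A A' d Vs Vs')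
    (hB' : ∀ i, decDsD d Vs Vs' i ≤ B'.eigenspace (b' * q ^ (d - 2 * i))) {j : ℤ} {v : V}
    (hv : v ∈ Vs' j) : B' v - (b' * q ^ (2 * j - d)) • v ∈ Vs' (j + 1) := by
  have := P.reflect.sub_smul_mem_pred' (dec0s0_reflect_le_eigenspace hB') (j := d - j)
    (by rwa [reflect, sub_sub_cancel])
  rw [reflect, inv_zpow'] at this
  convert this using 4 <;> ring_nf

theorem apply_mem_sumIcc_succ (P : IsQGeometricTDPair q a a' A A' d Vs Vs')
    (hB' : ∀ i, decDsD d Vs Vs' i ≤ B'.eigenspace (b' * q ^ (d - 2 * i))) {m n : ℤ} {v : V}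
    (hv : v ∈ sumIcc Vs m n) : B' v ∈ sumIcc Vs m (n + 1) := by
  have := apply_mem_sumIcc_reflect (d := d) (m := m) (n := n) (v := v)
    (P.reflect.apply_mem_sumIcc (dec0s0_reflect_le_eigenspace hB'))
  rw [reflect_reflect] at this
  exact this hv

theorem apply_mem_sumIcc_succ' (P : IsQGeometricTDPair q a a' A A' d Vs Vs')
    (hB' : ∀ i, decDsD d Vs Vs' i ≤ B'.eigenspace (b' * q ^ (d - 2 * i))) {m n : ℤ} {v : V}
    (hv : v ∈ sumIcc Vs' m n) : B' v ∈ sumIcc Vs' m (n + 1) := by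
  have := apply_mem_sumIcc_reflect (d := d) (m := m) (n := n) (v := v)
    (P.reflect.apply_mem_sumIcc' (dec0s0_reflect_le_eigenspace hB'))
  rw [reflect_reflect] at this
  exact this hv

theorem map_sub_dec0sD_le_succ (P : IsQGeometricTDPair q a a' A A' d Vs Vs')
    (hB' : ∀ i, decDsD d Vs Vs' i ≤ B'.eigenspace (b' * q ^ (d - 2 * i))) (i : ℤ) :
    (dec0sD d Vs Vs' i).map (B' - (b' * q ^ (d - 2 * i)) • 1) ≤ dec0sD d Vs Vs' (i + 1) := by
  simpa only [decDs0_reflect, inv_zpow', neg_sub] using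
    P.reflect.map_sub_decDs0_le_succ (dec0s0_reflect_le_eigenspace hB') i

theorem map_sub_decDs0_le_pred (P : IsQGeometricTDPair q a a' A A' d Vs Vs')
    (hB' : ∀ i, decDsD d Vs Vs' i ≤ B'.eigenspace (b' * q ^ (d - 2 * i))) (i : ℤ) :
    (decDs0 d Vs Vs' i).map (B' - (b' * q ^ (d - 2 * i)) • 1) ≤ decDs0 d Vs Vs' (i - 1) := by
  simpa only [dec0sD_reflect, inv_zpow', neg_sub] using
    P.reflect.map_sub_dec0sD_le_pred (dec0s0_reflect_le_eigenspace hB') i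

theorem map_decDsD_le [FiniteDimensional K V] (P : IsQGeometricTDPair q a a' A A' d Vs Vs')
    (hB : ∀ i, dec0s0 d Vs Vs' i ≤ B.eigenspace (b * q ^ (2 * i - d)))
    (hB' : ∀ i, decDsD d Vs Vs' i ≤ B'.eigenspace (b' * q ^ (d - 2 * i))) (hb' : b' ≠ 0)
    (i : ℤ) : (decDsD d Vs Vs' i).map B ≤
      decDsD d Vs Vs' (i - 1) ⊔ decDsD d Vs Vs' i ⊔ decDsD d Vs Vs' (i + 1) := by
  simpa only [dec0s0_reflect] using
    P.reflect.map_dec0s0_le (dec0s0_reflect_le_eigenspace hB') hb'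
      (apply_mem_sumIcc_reflect (P.apply_mem_sumIcc hB))
      (apply_mem_sumIcc_reflect (P.apply_mem_sumIcc' hB)) i

end IsQGeometricTDPair

theorem stmt6_general {K : Type*} [Field K]
    {V : Type*} [AddCommGroup V] [Module K V] [FiniteDimensional K V]
    (q : K) (hq0 : q ≠ 0) (hq : ∀ n : ℕ, 0 < n → q ^ n ≠ 1)
    (A A' : Module.End K V) (d : ℕ) (Vs Vs' : ℤ → Submodule K V) (θ θ' : ℤ → K)
    (hTD : IsTridiagonalPair A A' d Vs Vs' θ θ')
    (a a' : K) (ha : a ≠ 0) (ha' : a' ≠ 0)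
    (hθ : ∀ i : ℤ, 0 ≤ i → i ≤ (d : ℤ) → θ i = a * q ^ (2 * i - (d : ℤ)))
    (hθ' : ∀ i : ℤ, 0 ≤ i → i ≤ (d : ℤ) → θ' i = a' * q ^ ((d : ℤ) - 2 * i))
    (b b' : K) (hb : b ≠ 0) (hb' : b' ≠ 0)
    (B : Module.End K V)
    (hB : ∀ i : ℤ, 0 ≤ i → i ≤ (d : ℤ) → ∀ v ∈ dec0s0 d Vs Vs' i,
      B v = (b * q ^ (2 * i - (d : ℤ))) • v)
    (B' : Module.End K V)
    (hB' : ∀ i : ℤ, 0 ≤ i → i ≤ (d : ℤ) → ∀ v ∈ decDsD d Vs Vs' i,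
      B' v = (b' * q ^ ((d : ℤ) - 2 * i)) • v)
    :
    ∀ i : ℤ, 0 ≤ i → i ≤ (d : ℤ) →
      -- [0D]
      (Submodule.map (B - (b * q ^ ((d : ℤ) - 2 * i)) • 1) (dec0D Vs i) ≤ dec0D Vs (i - 1) ∧
        Submodule.map (B' - (b' * q ^ ((d : ℤ) - 2 * i)) • 1) (dec0D Vs i) ≤ dec0D Vs (i + 1)) ∧
      -- [0*D*]
      (Submodule.map (B - (b * q ^ (2 * i - (d : ℤ))) • 1) (dec0sDs Vs' i) ≤ dec0sDs Vs' (i - 1) ∧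
        Submodule.map (B' - (b' * q ^ (2 * i - (d : ℤ))) • 1) (dec0sDs Vs' i) ≤
          dec0sDs Vs' (i + 1)) ∧
      -- [0*D]
      (Submodule.map (B - (b * q ^ (2 * i - (d : ℤ))) • 1) (dec0sD d Vs Vs' i) ≤
          dec0sD d Vs Vs' (i - 1) ∧
        Submodule.map (B' - (b' * q ^ ((d : ℤ) - 2 * i)) • 1) (dec0sD d Vs Vs' i) ≤
          dec0sD d Vs Vs' (i + 1)) ∧
      -- [0*0]
      (Submodule.map (B - (b * q ^ (2 * i - (d : ℤ))) • 1) (dec0s0 d Vs Vs' i) = ⊥ ∧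
        Submodule.map B' (dec0s0 d Vs Vs' i) ≤
          dec0s0 d Vs Vs' (i - 1) ⊔ dec0s0 d Vs Vs' i ⊔ dec0s0 d Vs Vs' (i + 1)) ∧
      -- [D*0]
      (Submodule.map (B - (b * q ^ (2 * i - (d : ℤ))) • 1) (decDs0 d Vs Vs' i) ≤
          decDs0 d Vs Vs' (i + 1) ∧
        Submodule.map (B' - (b' * q ^ ((d : ℤ) - 2 * i)) • 1) (decDs0 d Vs Vs' i) ≤
          decDs0 d Vs Vs' (i - 1)) ∧
      -- [D*D]
      (Submodule.map B (decDsD d Vs Vs' i) ≤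
          decDsD d Vs Vs' (i - 1) ⊔ decDsD d Vs Vs' i ⊔ decDsD d Vs Vs' (i + 1) ∧
        Submodule.map (B' - (b' * q ^ ((d : ℤ) - 2 * i)) • 1) (decDsD d Vs Vs' i) = ⊥) := by
  have P := IsQGeometricTDPair.of_isTridiagonalPair hTD hθ hθ'
    (zpow_injective_of_pow_ne_one hq0 hq) ha ha'
  have hBe : ∀ i, dec0s0 d Vs Vs' i ≤ B.eigenspace (b * q ^ (2 * i - d)) :=
    le_eigenspace_of_eq_bot (U := dec0s0 d Vs Vs') (fun _ => dec0s0_eq_bot) hB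
  have hB'e : ∀ i, decDsD d Vs Vs' i ≤ B'.eigenspace (b' * q ^ (d - 2 * i)) :=
    le_eigenspace_of_eq_bot (U := decDsD d Vs Vs') (fun _ => decDsD_eq_bot) hB'
  intro i _ _
  exact ⟨⟨map_sub_smul_one_le_iff.2 fun _ => P.sub_smul_mem_pred hBe,
      map_sub_smul_one_le_iff.2 fun _ => P.sub_smul_mem_succ hB'e⟩,
    ⟨map_sub_smul_one_le_iff.2 fun _ => P.sub_smul_mem_pred' hBe,
      map_sub_smul_one_le_iff.2 fun _ => P.sub_smul_mem_succ' hB'e⟩,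
    ⟨P.map_sub_dec0sD_le_pred hBe i, P.map_sub_dec0sD_le_succ hB'e i⟩,
    ⟨map_sub_smul_one_eq_bot (hBe i),
      P.map_dec0s0_le hBe hb (P.apply_mem_sumIcc_succ hB'e) (P.apply_mem_sumIcc_succ' hB'e) i⟩,
    ⟨P.map_sub_decDs0_le_succ hBe i, P.map_sub_decDs0_le_pred hB'e i⟩,
    ⟨P.map_decDsD_le hBe hB'e hb' i, map_sub_smul_one_eq_bot (hB'e i)⟩⟩

/-- the actions of `B` and `B*` on the six decompositions. -/
theorem stmt6 {K : Type*} [Field K] [IsAlgClosed K]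
    {V : Type*} [AddCommGroup V] [Module K V] [FiniteDimensional K V] [Nontrivial V]
    (q : K) (hq0 : q ≠ 0) (hq : ∀ n : ℕ, 0 < n → q ^ n ≠ 1)
    (A A' : Module.End K V) (d : ℕ) (Vs Vs' : ℤ → Submodule K V) (θ θ' : ℤ → K)
    (hTD : IsTridiagonalPair A A' d Vs Vs' θ θ')
    (a a' : K) (ha : a ≠ 0) (ha' : a' ≠ 0)
    (hθ : ∀ i : ℤ, 0 ≤ i → i ≤ (d : ℤ) → θ i = a * q ^ (2 * i - (d : ℤ)))
    (hθ' : ∀ i : ℤ, 0 ≤ i → i ≤ (d : ℤ) → θ' i = a' * q ^ ((d : ℤ) - 2 * i))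
    (b b' : K) (hb : b ≠ 0) (hb' : b' ≠ 0)
    (B : Module.End K V)
    (hB : ∀ i : ℤ, 0 ≤ i → i ≤ (d : ℤ) → ∀ v ∈ dec0s0 d Vs Vs' i,
      B v = (b * q ^ (2 * i - (d : ℤ))) • v)
    (B' : Module.End K V)
    (hB' : ∀ i : ℤ, 0 ≤ i → i ≤ (d : ℤ) → ∀ v ∈ decDsD d Vs Vs' i,
      B' v = (b' * q ^ ((d : ℤ) - 2 * i)) • v)
    (Kop : Module.End K V)
    (hKop : ∀ i : ℤ, 0 ≤ i → i ≤ (d : ℤ) → ∀ v ∈ dec0sD d Vs Vs' i,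
      Kop v = (q ^ (2 * i - (d : ℤ))) • v)
    (Ks : Module.End K V)
    (hKs : ∀ i : ℤ, 0 ≤ i → i ≤ (d : ℤ) → ∀ v ∈ decDs0 d Vs Vs' i,
      Ks v = (q ^ (2 * i - (d : ℤ))) • v)
    (Kinv Ksinv : Module.End K V)
    (hKinv1 : Kop * Kinv = 1) (hKinv2 : Kinv * Kop = 1)
    (hKsinv1 : Ks * Ksinv = 1) (hKsinv2 : Ksinv * Ks = 1)
    :
    ∀ i : ℤ, 0 ≤ i → i ≤ (d : ℤ) →
      -- [0D]
      (Submodule.map (B - (b * q ^ ((d : ℤ) - 2 * i)) • 1) (dec0D Vs i) ≤ dec0D Vs (i - 1) ∧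
        Submodule.map (B' - (b' * q ^ ((d : ℤ) - 2 * i)) • 1) (dec0D Vs i) ≤ dec0D Vs (i + 1)) ∧
      -- [0*D*]
      (Submodule.map (B - (b * q ^ (2 * i - (d : ℤ))) • 1) (dec0sDs Vs' i) ≤ dec0sDs Vs' (i - 1) ∧
        Submodule.map (B' - (b' * q ^ (2 * i - (d : ℤ))) • 1) (dec0sDs Vs' i) ≤
          dec0sDs Vs' (i + 1)) ∧
      -- [0*D]
      (Submodule.map (B - (b * q ^ (2 * i - (d : ℤ))) • 1) (dec0sD d Vs Vs' i) ≤
          dec0sD d Vs Vs' (i - 1) ∧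
        Submodule.map (B' - (b' * q ^ ((d : ℤ) - 2 * i)) • 1) (dec0sD d Vs Vs' i) ≤
          dec0sD d Vs Vs' (i + 1)) ∧
      -- [0*0]
      (Submodule.map (B - (b * q ^ (2 * i - (d : ℤ))) • 1) (dec0s0 d Vs Vs' i) = ⊥ ∧
        Submodule.map B' (dec0s0 d Vs Vs' i) ≤
          dec0s0 d Vs Vs' (i - 1) ⊔ dec0s0 d Vs Vs' i ⊔ dec0s0 d Vs Vs' (i + 1)) ∧
      -- [D*0]
      (Submodule.map (B - (b * q ^ (2 * i - (d : ℤ))) • 1) (decDs0 d Vs Vs' i) ≤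
          decDs0 d Vs Vs' (i + 1) ∧
        Submodule.map (B' - (b' * q ^ ((d : ℤ) - 2 * i)) • 1) (decDs0 d Vs Vs' i) ≤
          decDs0 d Vs Vs' (i - 1)) ∧
      -- [D*D]
      (Submodule.map B (decDsD d Vs Vs' i) ≤
          decDsD d Vs Vs' (i - 1) ⊔ decDsD d Vs Vs' i ⊔ decDsD d Vs Vs' (i + 1) ∧
        Submodule.map (B' - (b' * q ^ ((d : ℤ) - 2 * i)) • 1) (decDsD d Vs Vs' i) = ⊥) :=
  stmt6_general q hq0 hq A A' d Vs Vs' θ θ' hTD a a' ha ha' hθ hθ' b b' hb hb' B hB B' hB'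
end
end
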